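/- arXiv:0704.0556 — 2 statements merged into one kernel-verified Lean document; each statement's English description precedes it below -/
import Mathlib

section
/- Let v₁, v₂ be vectors in Euclidean space ℝ³, let m₁, m₂ > 0 be real masses, let Δ, α be real numbers, set β = -α·(m₁v₁ + m₂v₂)/(m₁ + m₂), define v'ᵢ = (1 + α)vᵢ + β for i = 1, 2, and set q = m₁m₂/(2(m₁ + m₂)) and a = ‖v₁ - v₂‖². Then the energy conservation condition (½m₁‖v'₁‖² + ½m₂‖v'₂‖²) - (½m₁‖v₁‖² + ½m₂‖v₂‖²) = Δ holds if and only if α satisfies the quadratic equation α²·q·a + 2·q·a·α - Δ = 0. -/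
/-!
The rescaling fixes the centre-of-mass velocity `V` and multiplies the relative velocity
`v₁ - v₂` by `1 + α`. By König's decomposition the kinetic energy of the pair is
`½ (m₁ + m₂) ‖V‖² + ½ μ ‖v₁ - v₂‖²` with reduced mass `μ = m₁ m₂ / (m₁ + m₂) = 2 q`, so the
energy changes by `q a ((1 + α)² - 1) = q a (α² + 2 α)`.
-/

section TwoBody

variable {E : Type*} [NormedAddCommGroup E] [InnerProductSpace ℝ E]

theorem kineticEnergy_eq_centerOfMass_add_relative {m₁ m₂ : ℝ} (hM : m₁ + m₂ ≠ 0) (v₁ v₂ : E) :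
    1/2 * m₁ * ‖v₁‖ ^ 2 + 1/2 * m₂ * ‖v₂‖ ^ 2
      = 1/2 * (m₁ + m₂) * ‖(m₁ + m₂)⁻¹ • (m₁ • v₁ + m₂ • v₂)‖ ^ 2
        + 1/2 * (m₁ * m₂ / (m₁ + m₂)) * ‖v₁ - v₂‖ ^ 2 := by
  simp only [← real_inner_self_eq_norm_sq, inner_sub_sub_self, inner_add_add_self,
    real_inner_smul_left, real_inner_smul_right, real_inner_comm v₁ v₂]
  field_simp
  ring

variable {m₁ m₂ α : ℝ} {v₁ v₂ : E}

theorem rescaled_totalMomentum_eq (hM : m₁ + m₂ ≠ 0) :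
    m₁ • ((1 + α) • v₁ + (-α / (m₁ + m₂)) • (m₁ • v₁ + m₂ • v₂))
      + m₂ • ((1 + α) • v₂ + (-α / (m₁ + m₂)) • (m₁ • v₁ + m₂ • v₂))
      = m₁ • v₁ + m₂ • v₂ := by
  have hshift : (m₁ + m₂) * (-α / (m₁ + m₂)) = -α := mul_div_cancel₀ _ hM
  calc _ = (1 + α) • (m₁ • v₁ + m₂ • v₂)
        + ((m₁ + m₂) * (-α / (m₁ + m₂))) • (m₁ • v₁ + m₂ • v₂) := by module
    _ = m₁ • v₁ + m₂ • v₂ := by rw [hshift]; module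

end TwoBody

theorem energy_conservation_iff_quadratic
    (v₁ v₂ : EuclideanSpace ℝ (Fin 3)) (m₁ m₂ Δ α : ℝ)
    (hm₁ : 0 < m₁) (hm₂ : 0 < m₂)
    (β : EuclideanSpace ℝ (Fin 3))
    (hβ : β = (-α / (m₁ + m₂)) • (m₁ • v₁ + m₂ • v₂))
    (v₁' v₂' : EuclideanSpace ℝ (Fin 3))
    (h₁ : v₁' = (1 + α) • v₁ + β)
    (h₂ : v₂' = (1 + α) • v₂ + β)
    (q a : ℝ)
    (hq : q = m₁ * m₂ / (2 * (m₁ + m₂)))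
    (ha : a = ‖v₁ - v₂‖ ^ 2) :
    (1/2 * m₁ * ‖v₁'‖ ^ 2 + 1/2 * m₂ * ‖v₂'‖ ^ 2)
      - (1/2 * m₁ * ‖v₁‖ ^ 2 + 1/2 * m₂ * ‖v₂‖ ^ 2) = Δ
      ↔ α ^ 2 * q * a + 2 * q * a * α - Δ = 0 := by
  have hM : m₁ + m₂ ≠ 0 := by positivity
  have hmomentum : m₁ • v₁' + m₂ • v₂' = m₁ • v₁ + m₂ • v₂ := by
    rw [h₁, h₂, hβ, rescaled_totalMomentum_eq hM]
  have hrelative : v₁' - v₂' = (1 + α) • (v₁ - v₂) := by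
    rw [h₁, h₂, add_sub_add_right_eq_sub, smul_sub]
  have henergy : (1/2 * m₁ * ‖v₁'‖ ^ 2 + 1/2 * m₂ * ‖v₂'‖ ^ 2)
      - (1/2 * m₁ * ‖v₁‖ ^ 2 + 1/2 * m₂ * ‖v₂‖ ^ 2) = α ^ 2 * q * a + 2 * q * a * α := by
    rw [kineticEnergy_eq_centerOfMass_add_relative hM v₁', kineticEnergy_eq_centerOfMass_add_relative hM v₁, hmomentum,
      hrelative, norm_smul (1 + α), mul_pow, Real.norm_eq_abs, sq_abs, ← ha, hq]
    field_simp
    ring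
  rw [henergy, sub_eq_zero]
end

section
/- Let v₁, v₂ be vectors in Euclidean space ℝ³ with v₁ ≠ v₂, let m₁, m₂ > 0 be real masses, set q = m₁m₂/(2(m₁ + m₂)) and a = ‖v₁ - v₂‖², and let Δ be a real number with Δ ≥ -q·a. Then there exist a real number α and vectors v'₁, v'₂ ∈ ℝ³ of the form v'ᵢ = (1 + α)vᵢ + β with β = -α·(m₁v₁ + m₂v₂)/(m₁ + m₂), such that both m₁v'₁ + m₂v'₂ = m₁v₁ + m₂v₂ (momentum conservation) and (½m₁‖v'₁‖² + ½m₂‖v'₂‖²) - (½m₁‖v₁‖² + ½m₂‖v₂‖²) = Δ (the prescribed kinetic energy change). -/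
/-!
With `V` the centre-of-mass velocity, the rescaled velocities are `V + (1 + α) • (vᵢ - V)`: the
momentum is untouched, and only the kinetic energy of the relative motion, `q * a`, changes, by the
factor `(1 + α) ^ 2`. Hence `1 + α = √(1 + Δ / (q * a))` works, as `q * a > 0` and `Δ ≥ -(q * a)`.
-/

open RealInnerProductSpace

noncomputable section Rescaling

variable {E : Type*} [NormedAddCommGroup E] [InnerProductSpace ℝ E]

def rescaleVelocity (m₁ m₂ α : ℝ) (v₁ v₂ v : E) : E :=
  (1 + α) • v + (-α / (m₁ + m₂)) • (m₁ • v₁ + m₂ • v₂)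

def kineticEnergy (m₁ m₂ : ℝ) (v₁ v₂ : E) : ℝ :=
  1 / 2 * m₁ * ‖v₁‖ ^ 2 + 1 / 2 * m₂ * ‖v₂‖ ^ 2

variable {m₁ m₂ : ℝ} (α : ℝ) (v₁ v₂ : E)

theorem rescaleVelocity_left (hM : m₁ + m₂ ≠ 0) :
    rescaleVelocity m₁ m₂ α v₁ v₂ v₁ = v₁ + (α * m₂ / (m₁ + m₂)) • (v₁ - v₂) := by
  unfold rescaleVelocity
  match_scalars
  · field_simp
    ring
  · field_simp

theorem rescaleVelocity_right (hM : m₁ + m₂ ≠ 0) :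
    rescaleVelocity m₁ m₂ α v₁ v₂ v₂ = v₂ - (α * m₁ / (m₁ + m₂)) • (v₁ - v₂) := by
  unfold rescaleVelocity
  match_scalars
  · field_simp
    ring
  · field_simp

theorem momentum_rescaleVelocity (hM : m₁ + m₂ ≠ 0) :
    m₁ • rescaleVelocity m₁ m₂ α v₁ v₂ v₁ + m₂ • rescaleVelocity m₁ m₂ α v₁ v₂ v₂ =
      m₁ • v₁ + m₂ • v₂ := by
  rw [rescaleVelocity_left α v₁ v₂ hM, rescaleVelocity_right α v₁ v₂ hM]
  match_scalars <;> field_simp <;> ring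

theorem kineticEnergy_rescaleVelocity (hM : m₁ + m₂ ≠ 0) :
    kineticEnergy m₁ m₂ (rescaleVelocity m₁ m₂ α v₁ v₂ v₁) (rescaleVelocity m₁ m₂ α v₁ v₂ v₂) =
      kineticEnergy m₁ m₂ v₁ v₂ +
        ((1 + α) ^ 2 - 1) * (m₁ * m₂ / (2 * (m₁ + m₂)) * ‖v₁ - v₂‖ ^ 2) := by
  have h₁ : ⟪v₁, v₁ - v₂⟫ = ⟪v₂, v₁ - v₂⟫ + ‖v₁ - v₂‖ ^ 2 := by
    rw [← real_inner_self_eq_norm_sq, inner_sub_left]; ring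
  rw [rescaleVelocity_left α v₁ v₂ hM, rescaleVelocity_right α v₁ v₂ hM]
  simp only [kineticEnergy, norm_add_sq_real, norm_sub_sq_real, real_inner_smul_right, norm_smul,
    Real.norm_eq_abs, mul_pow, sq_abs, h₁]
  field_simp
  ring

end Rescaling

theorem exists_mul_sq_sub_one_eq {c Δ : ℝ} (hc : 0 < c) (hΔ : -c ≤ Δ) :
    ∃ s : ℝ, c * (s ^ 2 - 1) = Δ := by
  refine ⟨√((c + Δ) / c), ?_⟩
  rw [Real.sq_sqrt (div_nonneg (by linarith) hc.le)]
  field_simp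
  ring

theorem exists_rescaling_conserving_momentum_and_energy
    (v₁ v₂ : EuclideanSpace ℝ (Fin 3)) (hv : v₁ ≠ v₂)
    (m₁ m₂ : ℝ) (hm₁ : 0 < m₁) (hm₂ : 0 < m₂)
    (q a : ℝ)
    (hq : q = m₁ * m₂ / (2 * (m₁ + m₂)))
    (ha : a = ‖v₁ - v₂‖ ^ 2)
    (Δ : ℝ) (hΔ : Δ ≥ -(q * a)) :
    ∃ (α : ℝ) (v₁' v₂' : EuclideanSpace ℝ (Fin 3)),
      v₁' = (1 + α) • v₁ + (-α / (m₁ + m₂)) • (m₁ • v₁ + m₂ • v₂) ∧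
      v₂' = (1 + α) • v₂ + (-α / (m₁ + m₂)) • (m₁ • v₁ + m₂ • v₂) ∧
      m₁ • v₁' + m₂ • v₂' = m₁ • v₁ + m₂ • v₂ ∧
      (1/2 * m₁ * ‖v₁'‖ ^ 2 + 1/2 * m₂ * ‖v₂'‖ ^ 2)
        - (1/2 * m₁ * ‖v₁‖ ^ 2 + 1/2 * m₂ * ‖v₂‖ ^ 2) = Δ := by
  have hM : m₁ + m₂ ≠ 0 := by positivity
  have hqa : 0 < q * a := by
    have : 0 < ‖v₁ - v₂‖ := norm_pos_iff.mpr (sub_ne_zero.mpr hv)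
    rw [hq, ha]
    positivity
  obtain ⟨s, hs⟩ := exists_mul_sq_sub_one_eq hqa (by linarith)
  refine ⟨s - 1, rescaleVelocity m₁ m₂ (s - 1) v₁ v₂ v₁, rescaleVelocity m₁ m₂ (s - 1) v₁ v₂ v₂,
    rfl, rfl, momentum_rescaleVelocity _ v₁ v₂ hM, ?_⟩
  have hE := kineticEnergy_rescaleVelocity (s - 1) v₁ v₂ hM
  simp only [kineticEnergy, add_sub_cancel] at hE
  rw [hE, ← hq, ← ha, ← hs]
  ring
end
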